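/- arXiv:2010.06372 — 6 statements merged into one kernel-verified Lean document; each statement's English description precedes it below -/
import Mathlib

section
/- Let n ≥ 3 and let a_1, a_2, …, a_{n-1} be real numbers such that min{a_1, …, a_{n-1}} ≤ 0 and max{a_1, …, a_{n-1}} ≥ 0. Then ∑_{i=1}^{n-1} a_i² ≥ (1/(n-2)) (∑_{i=1}^{n-1} a_i)². -/
/-- For `n ≥ 3` and reals `a_1, …, a_{n-1}` with
`min aᵢ ≤ 0` and `max aᵢ ≥ 0`, one has `∑ aᵢ² ≥ (1/(n-2)) (∑ aᵢ)²`. -/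
theorem sum_sq_ge_of_min_nonpos_max_nonneg (n : ℕ) (hn : 3 ≤ n) (a : Fin (n - 1) → ℝ)
    (hmin : ∃ i, a i ≤ 0) (hmax : ∃ i, 0 ≤ a i) :
    ∑ i, (a i) ^ 2 ≥ (1 / ((n : ℝ) - 2)) * (∑ i, a i) ^ 2 := by
  obtain ⟨i0, hi0⟩ := hmin
  obtain ⟨i1, hi1⟩ := hmax
  have hc : (0:ℝ) < (n:ℝ) - 2 := by
    have : (3:ℝ) ≤ (n:ℝ) := by exact_mod_cast hn
    linarith
  rw [ge_iff_le, one_div, inv_mul_le_iff₀ hc]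
  by_cases heq : i0 = i1
  · -- a i0 = 0
    have h0 : a i0 = 0 := le_antisymm hi0 (heq ▸ hi1)
    set t := (Finset.univ : Finset (Fin (n-1))).erase i0 with ht
    have hcard : (t.card : ℝ) = (n:ℝ) - 2 := by
      have : t.card = (n - 1) - 1 := by
        simp [ht, Finset.card_erase_of_mem]
      rw [this]
      have h2 : 2 ≤ n - 1 := by omega
      push_cast [Nat.cast_sub (by omega : 1 ≤ n - 1), Nat.cast_sub (by omega : 1 ≤ n)]
      ring
    have hsum : ∑ i, a i = ∑ i ∈ t, a i := by
      rw [ht, ← Finset.add_sum_erase _ a (Finset.mem_univ i0), h0, zero_add]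
    have hsq : ∑ i ∈ t, (a i)^2 ≤ ∑ i, (a i)^2 := by
      apply Finset.sum_le_sum_of_subset_of_nonneg (Finset.erase_subset _ _)
      intro i _ _; positivity
    calc (∑ i, a i)^2 = (∑ i ∈ t, a i)^2 := by rw [hsum]
      _ ≤ t.card * ∑ i ∈ t, (a i)^2 := sq_sum_le_card_mul_sum_sq
      _ ≤ ((n:ℝ) - 2) * ∑ i, (a i)^2 := by
          rw [← hcard]
          exact mul_le_mul_of_nonneg_left hsq (by positivity)
  · set t := (Finset.univ : Finset (Fin (n-1))).erase i1 with ht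
    have hi0t : i0 ∈ t := by simp [ht, heq]
    set b := Function.update a i0 (a i0 + a i1) with hb
    have hcard : (t.card : ℝ) = (n:ℝ) - 2 := by
      have : t.card = (n - 1) - 1 := by
        simp [ht, Finset.card_erase_of_mem]
      rw [this]
      push_cast [Nat.cast_sub (by omega : 1 ≤ n - 1), Nat.cast_sub (by omega : 1 ≤ n)]
      ring
    have hsumb : ∑ i ∈ t, b i = ∑ i, a i := by
      rw [hb, Finset.sum_update_of_mem hi0t,
        ← Finset.add_sum_erase _ a (Finset.mem_univ i1),
        ← Finset.add_sum_erase _ a hi0t, Finset.erase_eq]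
      ring
    have hsqb : ∑ i ∈ t, (b i)^2 ≤ ∑ i, (a i)^2 := by
      have key : (a i0 + a i1)^2 ≤ (a i0)^2 + (a i1)^2 := by nlinarith [mul_nonneg (neg_nonneg.2 hi0) hi1]
      have : ∑ i ∈ t, (b i)^2 = (a i0 + a i1)^2 + ∑ i ∈ t.erase i0, (a i)^2 := by
        rw [hb, Finset.erase_eq]
        rw [show (fun i => (Function.update a i0 (a i0 + a i1) i)^2)
            = Function.update (fun i => (a i)^2) i0 ((a i0 + a i1)^2) from ?_]
        · exact Finset.sum_update_of_mem hi0t _ _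
        · funext j
          rcases eq_or_ne j i0 with hj|hj
          · subst hj; simp
          · simp [Function.update_of_ne hj]
      rw [this]
      have huniv : ∑ i, (a i)^2 = (a i1)^2 + ((a i0)^2 + ∑ i ∈ t.erase i0, (a i)^2) := by
        rw [← Finset.add_sum_erase _ _ (Finset.mem_univ i1), ← Finset.add_sum_erase _ _ hi0t]
      rw [huniv]; linarith
    calc (∑ i, a i)^2 = (∑ i ∈ t, b i)^2 := by rw [hsumb]
      _ ≤ t.card * ∑ i ∈ t, (b i)^2 := sq_sum_le_card_mul_sum_sq
      _ ≤ ((n:ℝ) - 2) * ∑ i, (a i)^2 := by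
          rw [← hcard]
          apply mul_le_mul_of_nonneg_left hsqb (by positivity)
end

section
/- Let m ≥ 2 be an integer, let B be a real symmetric positive definite m×m matrix, and let T be a real symmetric m×m matrix with trace(T) = 0. Then trace(B⁻¹ T B⁻¹ T) ≥ (1/(m-1)) (trace(B⁻¹ T))². -/
/-!
With `R = √B` and `S = R⁻¹ T R⁻¹`, the matrix `B⁻¹ T = R⁻¹ S R` is similar to the symmetric
matrix `S`, so both traces are spectral sums `∑ λᵢ` and `∑ λᵢ²` over the eigenvalues of `S`.
Diagonalizing `S = U diag(λ) Uᵀ`, the condition `tr T = tr (S B) = 0` reads `∑ λᵢ cᵢ = 0` with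
weights `cᵢ = (Uᵀ B U)ᵢᵢ > 0`, so the `λᵢ` cannot all share the strict sign of `∑ λᵢ`: some
`λₖ ∑ λᵢ ≤ 0`, whence `(∑ λᵢ)² ≤ (∑_{i ≠ k} λᵢ)² ≤ (m - 1) ∑ λᵢ²` by Cauchy–Schwarz.
-/

open Finset Matrix

theorem Finset.sq_sum_le_card_sub_one_mul_sum_sq_of_mul_sum_nonpos {ι : Type*}
    {s : Finset ι} {f : ι → ℝ} {k : ι} (hk : k ∈ s) (h : f k * ∑ i ∈ s, f i ≤ 0) :
    (∑ i ∈ s, f i) ^ 2 ≤ (#s - 1 : ℝ) * ∑ i ∈ s, f i ^ 2 := by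
  classical
  have hcard : (#(s.erase k) : ℝ) = #s - 1 := by
    rw [card_erase_of_mem hk, Nat.cast_sub (card_pos.2 ⟨k, hk⟩), Nat.cast_one]
  calc (∑ i ∈ s, f i) ^ 2 ≤ (∑ i ∈ s.erase k, f i) ^ 2 := by
        rw [sum_erase_eq_sub hk]; nlinarith [sq_nonneg (f k)]
    _ ≤ #(s.erase k) * ∑ i ∈ s.erase k, f i ^ 2 := sq_sum_le_card_mul_sum_sq
    _ ≤ (#s - 1 : ℝ) * ∑ i ∈ s, f i ^ 2 := by
        rw [← hcard]
        gcongr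
        exact erase_subset k s

theorem Finset.exists_mul_sum_nonpos_of_sum_mul_eq_zero {ι : Type*} {s : Finset ι}
    (hs : s.Nonempty) {f c : ι → ℝ} (hc : ∀ i ∈ s, 0 < c i) (h : ∑ i ∈ s, f i * c i = 0) :
    ∃ k ∈ s, f k * ∑ i ∈ s, f i ≤ 0 := by
  by_contra! hpos
  have : 0 < ∑ i ∈ s, f i * (∑ j ∈ s, f j) * c i :=
    sum_pos (fun i hi => mul_pos (hpos i hi) (hc i hi)) hs
  simp_rw [mul_right_comm _ (∑ j ∈ s, f j), ← sum_mul, h, zero_mul] at this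
  exact this.false

theorem Finset.sq_sum_le_card_sub_one_mul_sum_sq_of_sum_mul_eq_zero {ι : Type*}
    {s : Finset ι} {f c : ι → ℝ} (hc : ∀ i ∈ s, 0 < c i) (h : ∑ i ∈ s, f i * c i = 0) :
    (∑ i ∈ s, f i) ^ 2 ≤ (#s - 1 : ℝ) * ∑ i ∈ s, f i ^ 2 := by
  obtain rfl | hs := s.eq_empty_or_nonempty
  · simp
  obtain ⟨k, hk, hfk⟩ := exists_mul_sum_nonpos_of_sum_mul_eq_zero hs hc h
  exact sq_sum_le_card_sub_one_mul_sum_sq_of_mul_sum_nonpos hk hfk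

theorem Matrix.IsHermitian.trace_mul_eq_sum_eigenvalues_mul {𝕜 n : Type*} [RCLike 𝕜]
    [Fintype n] [DecidableEq n] {A : Matrix n n 𝕜} (hA : A.IsHermitian) (X : Matrix n n 𝕜) :
    (A * X).trace = ∑ i, (hA.eigenvalues i : 𝕜) *
      (star (hA.eigenvectorUnitary : Matrix n n 𝕜) * X * hA.eigenvectorUnitary) i i := by
  conv_lhs => rw [hA.spectral_theorem, Unitary.conjStarAlgAut_apply]
  rw [Matrix.mul_assoc, trace_mul_comm, ← Matrix.mul_assoc, trace_mul_comm, Matrix.mul_assoc]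
  simp [trace, diagonal_mul]

theorem Matrix.IsHermitian.sq_trace_le_card_sub_one_mul_trace_mul_self {n : Type*} [Fintype n]
    [DecidableEq n] {S P : Matrix n n ℝ} (hS : S.IsHermitian) (hP : P.PosDef)
    (h : (S * P).trace = 0) :
    S.trace ^ 2 ≤ (Fintype.card n - 1 : ℝ) * (S * S).trace := by
  set U : Matrix n n ℝ := ↑hS.eigenvectorUnitary with hU
  have hweights (i : n) : 0 < (star U * P * U) i i :=
    (hP.conjTranspose_mul_mul_same (mulVec_injective_iff_isUnit.2 Unitary.isUnit_coe)).diag_pos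
  have hdiag : star U * S * U = diagonal hS.eigenvalues :=
    hS.conjStarAlgAut_star_eigenvectorUnitary
  have hsq : (S * S).trace = ∑ i, hS.eigenvalues i ^ 2 := by
    rw [hS.trace_mul_eq_sum_eigenvalues_mul S, ← hU, hdiag]
    simp [sq]
  rw [hS.trace_eq_sum_eigenvalues, hsq]
  rw [hS.trace_mul_eq_sum_eigenvalues_mul P, ← hU] at h
  simpa using sq_sum_le_card_sub_one_mul_sum_sq_of_sum_mul_eq_zero (fun i _ => hweights i) h

theorem Matrix.PosDef.sq_trace_inv_mul_le {n : Type*} [Fintype n] [DecidableEq n]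
    {B T : Matrix n n ℝ} (hB : B.PosDef) (hT : T.IsHermitian) (hT₀ : T.trace = 0) :
    (B⁻¹ * T).trace ^ 2 ≤ (Fintype.card n - 1 : ℝ) * (B⁻¹ * T * B⁻¹ * T).trace := by
  open scoped MatrixOrder in
  obtain ⟨R, hRR, hR, hRunit⟩ : ∃ R : Matrix n n ℝ, R * R = B ∧ R.IsHermitian ∧ IsUnit R :=
    ⟨CFC.sqrt B, CFC.sqrt_mul_sqrt_self B, (CFC.sqrt_nonneg B).posSemidef.1,
      hB.isStrictlyPositive.isUnit_cfcSqrt⟩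
  set S := R⁻¹ * T * R⁻¹ with hSdef
  have hS : S.IsHermitian := by
    simpa only [hR.inv.eq] using isHermitian_mul_mul_conjTranspose R⁻¹ hT
  have hRdet : IsUnit R.det := (isUnit_iff_isUnit_det R).1 hRunit
  have hconj : B⁻¹ * T = R⁻¹ * S * R := by
    rw [← hRR, mul_inv_rev, hSdef]
    simp only [Matrix.mul_assoc, nonsing_inv_mul R hRdet, Matrix.mul_one]
  have hSB : (S * B).trace = 0 := by
    rw [← hRR, hSdef, Matrix.mul_assoc _ R⁻¹, nonsing_inv_mul_cancel_left R R hRdet,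
      trace_conj' hRunit, hT₀]
  have hsq : B⁻¹ * T * B⁻¹ * T = R⁻¹ * (S * S) * R := by
    rw [Matrix.mul_assoc (B⁻¹ * T), hconj]
    simp only [Matrix.mul_assoc, mul_nonsing_inv_cancel_left R _ hRdet]
  rw [hsq, hconj, trace_conj' hRunit, trace_conj' hRunit]
  exact hS.sq_trace_le_card_sub_one_mul_trace_mul_self hB hSB

theorem trace_inv_mul_sq_ge_general (m : ℕ) (hm : 2 ≤ m) (B T : Matrix (Fin m) (Fin m) ℝ)
    (hBpd : B.PosDef) (hTsymm : T.IsSymm) (hTtr : T.trace = 0) :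
    (B⁻¹ * T * B⁻¹ * T).trace ≥ (1 / ((m : ℝ) - 1)) * (B⁻¹ * T).trace ^ 2 := by
  have hm₁ : (0 : ℝ) < m - 1 := by
    have : (2 : ℝ) ≤ m := by exact_mod_cast hm
    linarith
  have key := hBpd.sq_trace_inv_mul_le (isHermitian_iff_isSymm.2 hTsymm) hTtr
  rw [Fintype.card_fin] at key
  rwa [ge_iff_le, one_div, inv_mul_le_iff₀ hm₁]

/-- For `m ≥ 2`, a real symmetric positive definite `m×m` matrix `B`
and a real symmetric `m×m` matrix `T` with `trace T = 0`, one has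
`trace(B⁻¹ T B⁻¹ T) ≥ (1/(m-1)) (trace(B⁻¹ T))²`. -/
theorem trace_inv_mul_sq_ge (m : ℕ) (hm : 2 ≤ m) (B T : Matrix (Fin m) (Fin m) ℝ)
    (hBsymm : B.IsSymm) (hBpd : B.PosDef) (hTsymm : T.IsSymm) (hTtr : T.trace = 0) :
    (B⁻¹ * T * B⁻¹ * T).trace ≥ (1 / ((m : ℝ) - 1)) * (B⁻¹ * T).trace ^ 2 :=
  trace_inv_mul_sq_ge_general m hm B T hBpd hTsymm hTtr
end

section
/- Let m ≥ 2 be an integer and let B be a real symmetric positive definite m×m matrix. Then trace(B⁻¹) ≥ (m-1) · (trace(B) / (m · det(B)))^{1/(m-1)}. -/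
open Finset Real Matrix

private lemma sum_inv_ge_aux (m : ℕ) (hm : 2 ≤ m) (lam : Fin m → ℝ) (hpos : ∀ i, 0 < lam i) :
    ((m : ℝ) - 1) * ((∑ i, lam i) / ((m : ℝ) * ∏ i, lam i)) ^ ((1 : ℝ) / ((m : ℝ) - 1))
      ≤ ∑ i, (lam i)⁻¹ := by
  have hm1 : (0:ℝ) < (m:ℝ) - 1 := by
    have : (2:ℝ) ≤ m := by exact_mod_cast hm
    linarith
  have hmpos : (0:ℝ) < m := by positivity
  have hprodpos : (0:ℝ) < ∏ i, lam i := Finset.prod_pos (fun i _ => hpos i)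
  have hsumpos : (0:ℝ) < ∑ i, lam i := Finset.sum_pos (fun i _ => hpos i) ⟨⟨0, by omega⟩, mem_univ _⟩
  -- pick the max eigenvalue
  obtain ⟨i₀, -, hmax⟩ := Finset.exists_max_image (univ : Finset (Fin m)) lam ⟨⟨0, by omega⟩, mem_univ _⟩
  have hmaxge : (∑ i, lam i) / m ≤ lam i₀ := by
    rw [div_le_iff₀ hmpos]
    calc ∑ i, lam i ≤ ∑ _i : Fin m, lam i₀ :=
          Finset.sum_le_sum (fun i _ => hmax i (mem_univ i))
      _ = lam i₀ * m := by simp [mul_comm]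
  set s : Finset (Fin m) := univ.erase i₀ with hs
  have hcard : (s.card : ℝ) = (m : ℝ) - 1 := by
    rw [hs, Finset.card_erase_of_mem (mem_univ _)]
    simp
    rw [Nat.cast_sub (by omega)]
    simp
  have hwsum : ∑ _i ∈ s, ((1:ℝ)/((m:ℝ)-1)) = 1 := by
    rw [Finset.sum_const, nsmul_eq_mul, hcard]
    field_simp
  have hamgm := Real.geom_mean_le_arith_mean_weighted s (fun _ => (1:ℝ)/((m:ℝ)-1))
      (fun j => (lam j)⁻¹) (fun i _ => (div_pos one_pos hm1).le) hwsum (fun i _ => (inv_nonneg.mpr (hpos i).le))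
  have hprodeq : ∏ j ∈ s, (lam j)⁻¹ = lam i₀ / ∏ i, lam i := by
    have h1 : (∏ j ∈ s, lam j) * lam i₀ = ∏ i, lam i := Finset.prod_erase_mul _ _ (mem_univ i₀)
    have h2 : (∏ j ∈ s, (lam j)⁻¹) * ∏ j ∈ s, lam j = 1 := by
      rw [← Finset.prod_mul_distrib]
      exact Finset.prod_eq_one (fun i _ => inv_mul_cancel₀ (hpos i).ne')
    rw [eq_div_iff hprodpos.ne', ← h1, ← mul_assoc, h2, one_mul]
  have hLHS : (lam i₀ / ∏ i, lam i) ^ ((1:ℝ)/((m:ℝ)-1)) = ∏ j ∈ s, ((lam j)⁻¹) ^ ((1:ℝ)/((m:ℝ)-1)) := by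
    rw [← hprodeq, ← Real.finset_prod_rpow s _ (fun i _ => (inv_nonneg.mpr (hpos i).le))]
  have hmono : ((∑ i, lam i) / ((m : ℝ) * ∏ i, lam i)) ^ ((1:ℝ)/((m:ℝ)-1))
      ≤ (lam i₀ / ∏ i, lam i) ^ ((1:ℝ)/((m:ℝ)-1)) := by
    apply Real.rpow_le_rpow (div_nonneg hsumpos.le (mul_pos hmpos hprodpos).le) _ (div_pos one_pos hm1).le
    rw [div_le_div_iff₀ (mul_pos hmpos hprodpos) hprodpos]
    calc (∑ i, lam i) * ∏ i, lam i = ((∑ i, lam i)/m) * (m * ∏ i, lam i) := by field_simp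
      _ ≤ lam i₀ * (m * ∏ i, lam i) := by
          apply mul_le_mul_of_nonneg_right hmaxge (mul_pos hmpos hprodpos).le
  have hsumle : ∑ j ∈ s, (lam j)⁻¹ ≤ ∑ i, (lam i)⁻¹ :=
    Finset.sum_le_sum_of_subset_of_nonneg (Finset.subset_univ s)
      (fun i _ _ => inv_nonneg.mpr (hpos i).le)
  calc ((m : ℝ) - 1) * ((∑ i, lam i) / ((m : ℝ) * ∏ i, lam i)) ^ ((1:ℝ)/((m:ℝ)-1))
      ≤ ((m : ℝ) - 1) * (lam i₀ / ∏ i, lam i) ^ ((1:ℝ)/((m:ℝ)-1)) :=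
        mul_le_mul_of_nonneg_left hmono hm1.le
    _ = ((m : ℝ) - 1) * ∏ j ∈ s, ((lam j)⁻¹) ^ ((1:ℝ)/((m:ℝ)-1)) := by rw [hLHS]
    _ ≤ ((m : ℝ) - 1) * ∑ j ∈ s, ((1:ℝ)/((m:ℝ)-1)) * (lam j)⁻¹ :=
        mul_le_mul_of_nonneg_left hamgm hm1.le
    _ = ∑ j ∈ s, (lam j)⁻¹ := by
        rw [← Finset.mul_sum, ← mul_assoc]
        field_simp
    _ ≤ ∑ i, (lam i)⁻¹ := hsumle


/-- For `m ≥ 2` and a real symmetric positive definite `m×m` matrix `B`,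
`trace(B⁻¹) ≥ (m-1) · (trace B / (m · det B))^{1/(m-1)}` (real power). -/
theorem trace_inv_ge (m : ℕ) (hm : 2 ≤ m) (B : Matrix (Fin m) (Fin m) ℝ)
    (hBsymm : B.IsSymm) (hBpd : B.PosDef) :
    (B⁻¹).trace ≥ ((m : ℝ) - 1) * (B.trace / ((m : ℝ) * B.det)) ^ ((1 : ℝ) / ((m : ℝ) - 1)) := by
  have hB : B.IsHermitian := hBpd.1
  set lam := hB.eigenvalues with hlam
  have hpos : ∀ i, 0 < lam i := fun i => hBpd.eigenvalues_pos i
  set V : Matrix (Fin m) (Fin m) ℝ := (hB.eigenvectorUnitary : Matrix (Fin m) (Fin m) ℝ) with hV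
  have hV1 : star V * V = 1 := Matrix.mem_unitaryGroup_iff'.mp (hB.eigenvectorUnitary).2
  have hV2 : V * star V = 1 := Matrix.mem_unitaryGroup_iff.mp (hB.eigenvectorUnitary).2
  have hspec : B = V * Matrix.diagonal lam * star V := by
    have := hB.spectral_theorem
    simpa using this
  have hdet : B.det = ∏ i, lam i := by simpa using hB.det_eq_prod_eigenvalues
  have htr : B.trace = ∑ i, lam i := by
    rw [hspec, Matrix.trace_mul_cycle, hV1, one_mul, Matrix.trace_diagonal]
  have hinv : B⁻¹ = V * Matrix.diagonal (fun i => (lam i)⁻¹) * star V := by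
    apply Matrix.inv_eq_right_inv
    rw [hspec]
    calc V * Matrix.diagonal lam * star V * (V * Matrix.diagonal (fun i => (lam i)⁻¹) * star V)
        = V * (Matrix.diagonal lam * (star V * V) * Matrix.diagonal (fun i => (lam i)⁻¹)) * star V := by
          noncomm_ring
      _ = 1 := by
          rw [hV1, mul_one, Matrix.diagonal_mul_diagonal]
          have : (fun i => lam i * (lam i)⁻¹) = fun _ => (1:ℝ) := by
            funext i; exact mul_inv_cancel₀ (hpos i).ne'
          rw [this, Matrix.diagonal_one, mul_one, hV2]
  have htrinv : (B⁻¹).trace = ∑ i, (lam i)⁻¹ := by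
    rw [hinv, Matrix.trace_mul_cycle, hV1, one_mul, Matrix.trace_diagonal]
  rw [htrinv, htr, hdet]
  exact sum_inv_ge_aux m hm lam hpos
end

section
/- Let E be a real inner product space, let n ≥ 3 be an integer and set θ = 2 - 1/(n-2). Let a, b > 0 and A ≥ 0 be real constants. Suppose f_1, f_2 > 0 are real numbers, v_1, v_2 ∈ E, and L_1, L_2 are real numbers such that a·f_i·L_i - b·‖v_i‖² ≥ -A·f_i^θ for i = 1, 2. Then a·(f_1+f_2)·(L_1+L_2) - b·‖v_1+v_2‖² ≥ -2A·(f_1+f_2)^θ. -/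
/-- Pointwise algebraic form of the Guan–Li superadditivity lemma:
if `a fᵢ Lᵢ - b ‖vᵢ‖² ≥ -A fᵢ^θ` for `i = 1, 2` with `θ = 2 - 1/(n-2)`, then
`a (f₁+f₂)(L₁+L₂) - b ‖v₁+v₂‖² ≥ -2A (f₁+f₂)^θ`. -/
theorem guan_li_pointwise {E : Type*} [NormedAddCommGroup E] [InnerProductSpace ℝ E]
    (n : ℕ) (hn : 3 ≤ n) (θ : ℝ) (hθ : θ = 2 - 1 / ((n : ℝ) - 2))
    (a b A : ℝ) (ha : 0 < a) (hb : 0 < b) (hA : 0 ≤ A)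
    (f₁ f₂ : ℝ) (hf₁ : 0 < f₁) (hf₂ : 0 < f₂) (v₁ v₂ : E) (L₁ L₂ : ℝ)
    (h₁ : a * f₁ * L₁ - b * ‖v₁‖ ^ 2 ≥ -A * f₁ ^ θ)
    (h₂ : a * f₂ * L₂ - b * ‖v₂‖ ^ 2 ≥ -A * f₂ ^ θ) :
    a * (f₁ + f₂) * (L₁ + L₂) - b * ‖v₁ + v₂‖ ^ 2 ≥ -(2 * A) * (f₁ + f₂) ^ θ := by
  have hn' : (1 : ℝ) ≤ (n : ℝ) - 2 := by
    have : (3 : ℝ) ≤ (n : ℝ) := by exact_mod_cast hn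
    linarith
  have hθ1 : 0 ≤ θ - 1 := by
    have h : 1 / ((n : ℝ) - 2) ≤ 1 := by
      rw [div_le_one (by linarith)]; linarith
    rw [hθ]; linarith
  have hF : 0 < f₁ + f₂ := by linarith
  have eF : (f₁ + f₂) * (f₁ + f₂) ^ (θ - 1) = (f₁ + f₂) ^ θ := by
    have h := Real.rpow_add hF 1 (θ - 1)
    rw [Real.rpow_one] at h
    rw [← h, show (1 : ℝ) + (θ - 1) = θ from by ring]
  have e1 : f₁ ^ θ ≤ f₁ * (f₁ + f₂) ^ (θ - 1) := by
    have : f₁ ^ θ = f₁ * f₁ ^ (θ - 1) := by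
      have h := Real.rpow_add hf₁ 1 (θ - 1)
      rw [Real.rpow_one] at h
      rw [← h, show (1 : ℝ) + (θ - 1) = θ from by ring]
    rw [this]
    have := Real.rpow_le_rpow hf₁.le (by linarith : f₁ ≤ f₁ + f₂) hθ1
    nlinarith
  have e2 : f₂ ^ θ ≤ f₂ * (f₁ + f₂) ^ (θ - 1) := by
    have : f₂ ^ θ = f₂ * f₂ ^ (θ - 1) := by
      have h := Real.rpow_add hf₂ 1 (θ - 1)
      rw [Real.rpow_one] at h
      rw [← h, show (1 : ℝ) + (θ - 1) = θ from by ring]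
    rw [this]
    have := Real.rpow_le_rpow hf₂.le (by linarith : f₂ ≤ f₁ + f₂) hθ1
    nlinarith
  have H3₁ : (f₁ + f₂) * f₁ ^ θ ≤ f₁ * (f₁ + f₂) ^ θ := by
    calc (f₁ + f₂) * f₁ ^ θ ≤ (f₁ + f₂) * (f₁ * (f₁ + f₂) ^ (θ - 1)) :=
          mul_le_mul_of_nonneg_left e1 hF.le
      _ = f₁ * ((f₁ + f₂) * (f₁ + f₂) ^ (θ - 1)) := by ring
      _ = f₁ * (f₁ + f₂) ^ θ := by rw [eF]
  have H3₂ : (f₁ + f₂) * f₂ ^ θ ≤ f₂ * (f₁ + f₂) ^ θ := by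
    calc (f₁ + f₂) * f₂ ^ θ ≤ (f₁ + f₂) * (f₂ * (f₁ + f₂) ^ (θ - 1)) :=
          mul_le_mul_of_nonneg_left e2 hF.le
      _ = f₂ * ((f₁ + f₂) * (f₁ + f₂) ^ (θ - 1)) := by ring
      _ = f₂ * (f₁ + f₂) ^ θ := by rw [eF]
  have hx : ‖v₁ + v₂‖ ≤ ‖v₁‖ + ‖v₂‖ := norm_add_le _ _
  have hx2 : ‖v₁ + v₂‖ ^ 2 ≤ (‖v₁‖ + ‖v₂‖) ^ 2 := by
    nlinarith [norm_nonneg (v₁ + v₂), norm_nonneg v₁, norm_nonneg v₂]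
  have H1 : f₂ * (f₁ + f₂) * (a * f₁ * L₁ - b * ‖v₁‖ ^ 2 + A * f₁ ^ θ) ≥ 0 :=
    mul_nonneg (by positivity) (by linarith)
  have H2 : f₁ * (f₁ + f₂) * (a * f₂ * L₂ - b * ‖v₂‖ ^ 2 + A * f₂ ^ θ) ≥ 0 :=
    mul_nonneg (by positivity) (by linarith)
  have HA1 : A * (f₂ * ((f₁ + f₂) * f₁ ^ θ)) ≤ A * (f₂ * (f₁ * (f₁ + f₂) ^ θ)) := by
    apply mul_le_mul_of_nonneg_left (mul_le_mul_of_nonneg_left H3₁ hf₂.le) hA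
  have HA2 : A * (f₁ * ((f₁ + f₂) * f₂ ^ θ)) ≤ A * (f₁ * (f₂ * (f₁ + f₂) ^ θ)) := by
    apply mul_le_mul_of_nonneg_left (mul_le_mul_of_nonneg_left H3₂ hf₁.le) hA
  have Hb : f₁ * f₂ * (b * ‖v₁ + v₂‖ ^ 2) ≤
      b * (f₂ * (f₁ + f₂) * ‖v₁‖ ^ 2 + f₁ * (f₁ + f₂) * ‖v₂‖ ^ 2) := by
    have k1 : b * (f₁ * f₂) * ‖v₁ + v₂‖ ^ 2 ≤ b * (f₁ * f₂) * (‖v₁‖ + ‖v₂‖) ^ 2 :=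
      mul_le_mul_of_nonneg_left hx2 (by positivity)
    nlinarith [k1, mul_nonneg hb.le (sq_nonneg (f₁ * ‖v₂‖ - f₂ * ‖v₁‖))]
  have final : 0 ≤ f₁ * f₂ *
      (a * (f₁ + f₂) * (L₁ + L₂) - b * ‖v₁ + v₂‖ ^ 2 + 2 * A * (f₁ + f₂) ^ θ) := by
    linarith [H1, H2, HA1, HA2, Hb]
  have hpos : 0 < f₁ * f₂ := mul_pos hf₁ hf₂
  have h0 : f₁ * f₂ * 0 ≤ f₁ * f₂ *
      (a * (f₁ + f₂) * (L₁ + L₂) - b * ‖v₁ + v₂‖ ^ 2 + 2 * A * (f₁ + f₂) ^ θ) := by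
    rw [mul_zero]; exact final
  have := le_of_mul_le_mul_left h0 hpos
  linarith
end

section
/- Let E be a real inner product space with inner product ⟨·,·⟩. Let a, b > 0, A ≥ 0 and θ ∈ ℝ. Suppose f_1, f_2 > 0 are real numbers, v_1, v_2 ∈ E, and L_1, L_2 are real numbers such that a·f_i·L_i - b·‖v_i‖² ≥ -A·f_i^θ for i = 1, 2. Then the cross terms satisfy a·f_1·L_2 + a·f_2·L_1 - 2b·⟨v_1, v_2⟩ ≥ -A·(f_1·f_2^{θ-1} + f_2·f_1^{θ-1}). -/
open scoped RealInnerProductSpace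

/-- Cross-term estimate in the Guan–Li superadditivity lemma:
if `a fᵢ Lᵢ - b ‖vᵢ‖² ≥ -A fᵢ^θ` for `i = 1, 2`, then
`a f₁ L₂ + a f₂ L₁ - 2b ⟨v₁, v₂⟩ ≥ -A (f₁ f₂^{θ-1} + f₂ f₁^{θ-1})`. -/
theorem guan_li_cross_term {E : Type*} [NormedAddCommGroup E] [InnerProductSpace ℝ E]
    (a b A θ : ℝ) (ha : 0 < a) (hb : 0 < b) (hA : 0 ≤ A)
    (f₁ f₂ : ℝ) (hf₁ : 0 < f₁) (hf₂ : 0 < f₂) (v₁ v₂ : E) (L₁ L₂ : ℝ)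
    (h₁ : a * f₁ * L₁ - b * ‖v₁‖ ^ 2 ≥ -A * f₁ ^ θ)
    (h₂ : a * f₂ * L₂ - b * ‖v₂‖ ^ 2 ≥ -A * f₂ ^ θ) :
    a * f₁ * L₂ + a * f₂ * L₁ - 2 * b * ⟪v₁, v₂⟫ ≥
      -A * (f₁ * f₂ ^ (θ - 1) + f₂ * f₁ ^ (θ - 1)) := by
  have e1 : f₁ ^ (θ - 1) = f₁ ^ θ / f₁ := by
    rw [Real.rpow_sub hf₁, Real.rpow_one]
  have e2 : f₂ ^ (θ - 1) = f₂ ^ θ / f₂ := by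
    rw [Real.rpow_sub hf₂, Real.rpow_one]
  set x := f₁ ^ θ with hx
  set y := f₂ ^ θ with hy
  have hcs : ⟪v₁, v₂⟫ ≤ ‖v₁‖ * ‖v₂‖ := real_inner_le_norm v₁ v₂
  have hpos : 0 < f₁ * f₂ := mul_pos hf₁ hf₂
  rw [e1, e2, ge_iff_le, ← sub_nonneg]
  have key : 0 ≤ (a * f₁ * L₂ + a * f₂ * L₁ - 2 * b * ⟪v₁, v₂⟫ -
      -A * (f₁ * (y / f₂) + f₂ * (x / f₁))) * (f₁ * f₂) := by
    have expand : (a * f₁ * L₂ + a * f₂ * L₁ - 2 * b * ⟪v₁, v₂⟫ -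
        -A * (f₁ * (y / f₂) + f₂ * (x / f₁))) * (f₁ * f₂) =
        (a * f₁ * L₂ + a * f₂ * L₁ - 2 * b * ⟪v₁, v₂⟫) * (f₁ * f₂) +
        A * (f₁ ^ 2 * y + f₂ ^ 2 * x) := by
      field_simp
      ring
    rw [expand]
    nlinarith [mul_le_mul_of_nonneg_left h₁ (sq_nonneg f₂),
      mul_le_mul_of_nonneg_left h₂ (sq_nonneg f₁),
      sq_nonneg (f₂ * ‖v₁‖ - f₁ * ‖v₂‖),
      mul_le_mul_of_nonneg_left hcs (le_of_lt (by positivity : (0:ℝ) < 2 * b * (f₁ * f₂))),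
      norm_nonneg v₁, norm_nonneg v₂, hb.le, hf₁.le, hf₂.le]
  nlinarith [key, hpos]
end

section
/- Let E be a finite-dimensional real inner product space, let n ≥ 3 be an integer and set θ = 2 - 1/(n-2). Let a, b > 0 and A ≥ 0 be real constants. Let f_1, f_2 : E → ℝ be twice continuously differentiable nonnegative functions such that, for i = 1, 2 and every x ∈ E, a·f_i(x)·Δf_i(x) - b·‖∇f_i(x)‖² ≥ -A·f_i(x)^θ. Then f = f_1 + f_2 satisfies a·f(x)·Δf(x) - b·‖∇f(x)‖² ≥ -2A·f(x)^θ for every x ∈ E. -/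
/-!
Where `f₁` and `f₂` are both positive, multiply the inequality for `fᵢ` by `f / fᵢ ≥ 1`.
Since `θ ≥ 1`, `(f / fᵢ) fᵢ ^ θ ≤ f ^ θ`, and the weighted Cauchy–Schwarz inequality
`‖∇f₁ + ∇f₂‖² ≤ f (‖∇f₁‖² / f₁ + ‖∇f₂‖² / f₂)` absorbs the gradient terms. Where some `fᵢ`
vanishes it attains its minimum, so `∇fᵢ = 0` and `Δfᵢ ≥ 0`, and the inequality for the other
function suffices.
-/

/-- The Laplacian of `g : E → ℝ` at `x`: the trace of the Hessian, computed in the standard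
orthonormal basis of the finite-dimensional real inner product space `E`. -/
noncomputable def laplacian {E : Type*} [NormedAddCommGroup E] [InnerProductSpace ℝ E]
    [FiniteDimensional ℝ E] (g : E → ℝ) (x : E) : ℝ :=
  ∑ i, iteratedFDeriv ℝ 2 g x ![stdOrthonormalBasis ℝ E i, stdOrthonormalBasis ℝ E i]

open Filter Topology

theorem IsLocalMin.deriv_deriv_nonneg {g : ℝ → ℝ} {x₀ : ℝ} (hmin : IsLocalMin g x₀)
    (hg : Differentiable ℝ g) : 0 ≤ deriv (deriv g) x₀ := by
  by_contra! hneg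
  have hdecr : ∀ᶠ t in 𝓝[>] x₀, deriv g t < 0 :=
    deriv_neg_right_of_sign_deriv <| nhdsWithin_le_nhds <|
      eventually_nhdsWithin_sign_eq_of_deriv_neg hneg hmin.deriv_eq_zero
  obtain ⟨δ, hδ, hsub⟩ := mem_nhdsGT_iff_exists_Ioo_subset.mp
    (hdecr.and (nhdsWithin_le_nhds hmin))
  obtain ⟨t, hx₀t, htδ⟩ := exists_between (show x₀ < δ from hδ)
  have hanti : StrictAntiOn g (Set.Icc x₀ t) := by
    refine strictAntiOn_of_deriv_neg (convex_Icc _ _) hg.continuous.continuousOn fun y hy => ?_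
    rw [interior_Icc] at hy
    exact (hsub ⟨hy.1, hy.2.trans htδ⟩).1
  have hlt : g t < g x₀ := hanti ⟨le_rfl, hx₀t.le⟩ ⟨hx₀t.le, le_rfl⟩ hx₀t
  exact hlt.not_ge (hsub ⟨hx₀t, htδ⟩).2

theorem IsLocalMin.iteratedFDeriv_two_nonneg {E : Type*} [NormedAddCommGroup E]
    [NormedSpace ℝ E] {f : E → ℝ} {x : E} (hmin : IsLocalMin f x) (hf : ContDiff ℝ 2 f) (v : E) :
    0 ≤ iteratedFDeriv ℝ 2 f x ![v, v] := by
  set L : ℝ →L[ℝ] E := ContinuousLinearMap.toSpanSingleton ℝ v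
  have hshift : ContDiff ℝ 2 (fun z => f (x + z)) := hf.comp (contDiff_const.add contDiff_id)
  have hline : iteratedDeriv 2 ((fun z => f (x + z)) ∘ L) 0 = iteratedFDeriv ℝ 2 f x ![v, v] := by
    rw [iteratedDeriv_eq_iteratedFDeriv, L.iteratedFDeriv_comp_right hshift 0 le_rfl,
      iteratedFDeriv_comp_add_left]
    simp only [ContinuousMultilinearMap.compContinuousLinearMap_apply, L,
      ContinuousLinearMap.toSpanSingleton_apply, zero_smul, one_smul, add_zero]
    congr 1
    funext i
    fin_cases i <;> rfl
  have hmin_line : IsLocalMin ((fun z => f (x + z)) ∘ L) 0 :=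
    IsLocalMin.comp_continuous (g := fun t : ℝ => x + t • v) (by simpa using hmin) (by fun_prop)
  rw [← hline, iteratedDeriv_succ, iteratedDeriv_one]
  exact hmin_line.deriv_deriv_nonneg ((hshift.comp L.contDiff).differentiable two_ne_zero)

section InnerProductSpace

variable {E : Type*} [NormedAddCommGroup E] [InnerProductSpace ℝ E]

theorem IsLocalMin.gradient_eq_zero [CompleteSpace E] {f : E → ℝ} {x : E}
    (hmin : IsLocalMin f x) : gradient f x = 0 := by
  rw [gradient, hmin.fderiv_eq_zero, map_zero]

theorem gradient_add [CompleteSpace E] {f g : E → ℝ} {x : E} (hf : DifferentiableAt ℝ f x)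
    (hg : DifferentiableAt ℝ g x) : gradient (f + g) x = gradient f x + gradient g x := by
  rw [gradient, fderiv_add hf hg, map_add, gradient, gradient]

variable [FiniteDimensional ℝ E]

theorem IsLocalMin.laplacian_nonneg {f : E → ℝ} {x : E} (hmin : IsLocalMin f x)
    (hf : ContDiff ℝ 2 f) : 0 ≤ laplacian f x :=
  Finset.sum_nonneg fun _ _ => hmin.iteratedFDeriv_two_nonneg hf _

theorem laplacian_add {f g : E → ℝ} {x : E} (hf : ContDiffAt ℝ 2 f x) (hg : ContDiffAt ℝ 2 g x) :
    laplacian (f + g) x = laplacian f x + laplacian g x := by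
  simp only [laplacian, iteratedFDeriv_add_apply hf hg, add_apply, Finset.sum_add_distrib]

end InnerProductSpace

theorem add_sq_le_mul_add_div {p q : ℝ} (hp : 0 < p) (hq : 0 < q) (x y : ℝ) :
    (x + y) ^ 2 ≤ (p + q) * (x ^ 2 / p + y ^ 2 / q) := by
  rw [div_add_div _ _ hp.ne' hq.ne', mul_div_assoc', le_div_iff₀ (by positivity)]
  nlinarith [sq_nonneg (q * x - p * y)]

theorem div_mul_rpow_le_rpow {p s θ : ℝ} (hp : 0 < p) (hps : p ≤ s) (hθ : 1 ≤ θ) :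
    s / p * p ^ θ ≤ s ^ θ := by
  have hs : 0 < s := hp.trans_le hps
  calc s / p * p ^ θ = s * p ^ (θ - 1) := by rw [Real.rpow_sub_one hp.ne']; ring
    _ ≤ s * s ^ (θ - 1) :=
        mul_le_mul_of_nonneg_left (Real.rpow_le_rpow hp.le hps (sub_nonneg.mpr hθ)) hs.le
    _ = s ^ θ := by rw [Real.rpow_sub_one hs.ne', mul_div_cancel₀ _ hs.ne']

/-- `GuanLiIneq a b A θ p L u` is `a f Δf - b ‖∇f‖² ≥ -A f ^ θ` at a point where `f = p`,
`Δf = L` and `∇f = u`. -/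
def GuanLiIneq {F : Type*} [SeminormedAddCommGroup F] (a b A θ p L : ℝ) (u : F) : Prop :=
  -A * p ^ θ ≤ a * p * L - b * ‖u‖ ^ 2

namespace GuanLiIneq

variable {F : Type*} [SeminormedAddCommGroup F] {a b A θ p q s L₁ L₂ : ℝ} {u w : F}

theorem scale (h : GuanLiIneq a b A θ p L₁ u) (hθ : 1 ≤ θ) (hA : 0 ≤ A) (hp : 0 < p)
    (hps : p ≤ s) : -A * s ^ θ ≤ a * s * L₁ - b * (s / p * ‖u‖ ^ 2) :=
  calc -A * s ^ θ ≤ -A * (s / p * p ^ θ) :=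
        mul_le_mul_of_nonpos_left (div_mul_rpow_le_rpow hp hps hθ) (neg_nonpos.mpr hA)
    _ = s / p * (-A * p ^ θ) := by ring
    _ ≤ s / p * (a * p * L₁ - b * ‖u‖ ^ 2) :=
        mul_le_mul_of_nonneg_left h (div_pos (hp.trans_le hps) hp).le
    _ = a * s * L₁ - b * (s / p * ‖u‖ ^ 2) := by field_simp

theorem add_of_pos (h₁ : GuanLiIneq a b A θ p L₁ u) (h₂ : GuanLiIneq a b A θ q L₂ w)
    (hθ : 1 ≤ θ) (hb : 0 ≤ b) (hA : 0 ≤ A) (hp : 0 < p) (hq : 0 < q) :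
    GuanLiIneq a b (2 * A) θ (p + q) (L₁ + L₂) (u + w) := by
  have hu := h₁.scale hθ hA hp (le_add_of_nonneg_right hq.le)
  have hw := h₂.scale hθ hA hq (le_add_of_nonneg_left hp.le)
  have hgrad : ‖u + w‖ ^ 2 ≤ (p + q) * (‖u‖ ^ 2 / p + ‖w‖ ^ 2 / q) :=
    (pow_le_pow_left₀ (norm_nonneg _) (norm_add_le u w) 2).trans
      (add_sq_le_mul_add_div hp hq _ _)
  have hb_grad := mul_le_mul_of_nonneg_left hgrad hb
  have hsplit : b * ((p + q) * (‖u‖ ^ 2 / p + ‖w‖ ^ 2 / q)) =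
      b * ((p + q) / p * ‖u‖ ^ 2) + b * ((p + q) / q * ‖w‖ ^ 2) := by ring
  unfold GuanLiIneq
  linarith

theorem add_of_eq_zero_left (h₂ : GuanLiIneq a b A θ q L₂ w) (ha : 0 ≤ a) (hA : 0 ≤ A)
    (hq : 0 ≤ q) (hp : p = 0) (hu : u = 0) (hL₁ : 0 ≤ L₁) :
    GuanLiIneq a b (2 * A) θ (p + q) (L₁ + L₂) (u + w) := by
  subst hp hu
  unfold GuanLiIneq at h₂ ⊢
  rw [zero_add, zero_add]
  nlinarith [mul_nonneg (mul_nonneg ha hq) hL₁, mul_nonneg hA (Real.rpow_nonneg hq θ)]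

theorem add (h₁ : GuanLiIneq a b A θ p L₁ u) (h₂ : GuanLiIneq a b A θ q L₂ w)
    (hθ : 1 ≤ θ) (ha : 0 ≤ a) (hb : 0 ≤ b) (hA : 0 ≤ A) (hp : 0 ≤ p) (hq : 0 ≤ q)
    (hdeg₁ : p = 0 → u = 0 ∧ 0 ≤ L₁) (hdeg₂ : q = 0 → w = 0 ∧ 0 ≤ L₂) :
    GuanLiIneq a b (2 * A) θ (p + q) (L₁ + L₂) (u + w) := by
  rcases hp.eq_or_lt' with hp | hp
  · exact h₂.add_of_eq_zero_left ha hA hq hp (hdeg₁ hp).1 (hdeg₁ hp).2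
  rcases hq.eq_or_lt' with hq | hq
  · rw [add_comm p, add_comm L₁, add_comm u]
    exact h₁.add_of_eq_zero_left ha hA hp.le hq (hdeg₂ hq).1 (hdeg₂ hq).2
  exact h₁.add_of_pos h₂ hθ hb hA hp hq

end GuanLiIneq

/-- (Euclidean-domain version of Guan–Li, Lemma 2.2.) Let `E` be a
finite-dimensional real inner product space, `n ≥ 3`, `θ = 2 - 1/(n-2)`, `a, b > 0`, `A ≥ 0`.
If `f₁, f₂ : E → ℝ` are `C²` nonnegative functions with
`a fᵢ Δfᵢ - b ‖∇fᵢ‖² ≥ -A fᵢ^θ` everywhere, then `f = f₁ + f₂` satisfies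
`a f Δf - b ‖∇f‖² ≥ -2A f^θ` everywhere. -/
theorem guan_li_superadditivity {E : Type*} [NormedAddCommGroup E] [InnerProductSpace ℝ E]
    [FiniteDimensional ℝ E]
    (n : ℕ) (hn : 3 ≤ n) (θ : ℝ) (hθ : θ = 2 - 1 / ((n : ℝ) - 2))
    (a b A : ℝ) (ha : 0 < a) (hb : 0 < b) (hA : 0 ≤ A)
    (f₁ f₂ : E → ℝ) (hf₁ : ContDiff ℝ 2 f₁) (hf₂ : ContDiff ℝ 2 f₂)
    (hf₁0 : ∀ x, 0 ≤ f₁ x) (hf₂0 : ∀ x, 0 ≤ f₂ x)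
    (h₁ : ∀ x, a * f₁ x * laplacian f₁ x - b * ‖gradient f₁ x‖ ^ 2 ≥ -A * f₁ x ^ θ)
    (h₂ : ∀ x, a * f₂ x * laplacian f₂ x - b * ‖gradient f₂ x‖ ^ 2 ≥ -A * f₂ x ^ θ) :
    ∀ x, a * (f₁ + f₂) x * laplacian (f₁ + f₂) x - b * ‖gradient (f₁ + f₂) x‖ ^ 2 ≥
      -(2 * A) * (f₁ + f₂) x ^ θ := by
  have hθ1 : 1 ≤ θ := by
    have hn2 : (1 : ℝ) ≤ n - 2 := by
      have : (3 : ℝ) ≤ n := by exact_mod_cast hn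
      linarith
    have : 1 / ((n : ℝ) - 2) ≤ 1 := (div_le_one (by linarith)).mpr hn2
    linarith
  have hdeg : ∀ f : E → ℝ, ContDiff ℝ 2 f → (∀ y, 0 ≤ f y) → ∀ x, f x = 0 →
      gradient f x = 0 ∧ 0 ≤ laplacian f x := fun f hf hf0 x hx =>
    have hmin : IsLocalMin f x := Eventually.of_forall fun y => hx ▸ hf0 y
    ⟨hmin.gradient_eq_zero, hmin.laplacian_nonneg hf⟩
  intro x
  rw [laplacian_add hf₁.contDiffAt hf₂.contDiffAt,
    gradient_add (hf₁.differentiable two_ne_zero x) (hf₂.differentiable two_ne_zero x)]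
  exact GuanLiIneq.add (h₁ x) (h₂ x) hθ1 ha.le hb.le hA (hf₁0 x) (hf₂0 x)
    (hdeg f₁ hf₁ hf₁0 x) (hdeg f₂ hf₂ hf₂0 x)
end
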